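/- arXiv:2310.01860 — 6 statements merged into one kernel-verified Lean document; each statement's English description precedes it below -/
import Mathlib

section
/- Let X be a random vector in ℝ^d with E[X] = x, and suppose E[‖X − x‖^α] ≤ σ^α for some σ ≥ 0 and α ∈ (1,2], and ‖x‖ ≤ λ/2 for some λ > 0. Then the bias of the clipped estimator satisfies ‖E[clip(X,λ)] − x‖ ≤ 2^α σ^α / λ^{α−1}. -/
open MeasureTheory

/-- The clipping operator `clip(x, λ) = min{1, λ/‖x‖}·x` (with `clip(0, λ) = 0`). -/
noncomputable def clip {d : ℕ} (lam : ℝ) (x : EuclideanSpace ℝ (Fin d)) :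
    EuclideanSpace ℝ (Fin d) :=
  min 1 (lam / ‖x‖) • x

lemma clip_eq_self {d : ℕ} {lam : ℝ} {y : EuclideanSpace ℝ (Fin d)}
    (h : ‖y‖ ≤ lam) : clip lam y = y := by
  rcases eq_or_ne y 0 with rfl | hy
  · simp [clip]
  · have hny : 0 < ‖y‖ := norm_pos_iff.mpr hy
    have : (1 : ℝ) ≤ lam / ‖y‖ := (one_le_div hny).mpr h
    simp [clip, min_eq_left this]

lemma clip_key {d : ℕ} {lam α : ℝ} (hα₁ : 1 < α) (hlam : 0 < lam)
    (x y : EuclideanSpace ℝ (Fin d)) (hx : ‖x‖ ≤ lam / 2) :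
    ‖clip lam y - y‖ ≤ 2 ^ α / lam ^ (α - 1) * ‖y - x‖ ^ α := by
  have hC : 0 ≤ 2 ^ α / lam ^ (α - 1) :=
    div_nonneg (Real.rpow_nonneg (by norm_num) _) (Real.rpow_nonneg hlam.le _)
  rcases le_or_gt ‖y‖ lam with h | h
  · rw [clip_eq_self h, sub_self, norm_zero]
    exact mul_nonneg hC (Real.rpow_nonneg (norm_nonneg _) _)
  · have hny : 0 < ‖y‖ := hlam.trans h
    have hmin : min (1 : ℝ) (lam / ‖y‖) = lam / ‖y‖ :=
      min_eq_right ((div_lt_one hny).mpr h).le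
    have hLHS : ‖clip lam y - y‖ = ‖y‖ - lam := by
      have : clip lam y - y = (lam / ‖y‖ - 1) • y := by
        rw [clip, hmin, sub_smul, one_smul]
      rw [this, norm_smul, Real.norm_eq_abs,
        abs_of_nonpos (by nlinarith [(div_lt_one hny).mpr h]), neg_sub,
        sub_mul, one_mul, div_mul_cancel₀ _ hny.ne']
    rw [hLHS]
    set t := ‖y - x‖ with ht
    have ht1 : lam / 2 ≤ t := by
      have := norm_sub_norm_le y x
      have h2 : ‖y‖ - ‖x‖ ≥ lam - lam / 2 := by linarith
      linarith
    have htpos : 0 < t := lt_of_lt_of_le (by linarith) ht1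
    have hstep : t * (lam / 2) ^ (α - 1) ≤ t ^ α := by
      have : (lam / 2) ^ (α - 1) ≤ t ^ (α - 1) :=
        Real.rpow_le_rpow (by linarith) ht1 (by linarith)
      calc t * (lam / 2) ^ (α - 1) ≤ t * t ^ (α - 1) :=
            mul_le_mul_of_nonneg_left this htpos.le
        _ = t ^ α := by
            rw [← Real.rpow_one_add' htpos.le (by linarith : 1 + (α - 1) ≠ 0)]
            norm_num
    have hl : (0:ℝ) < lam ^ (α - 1) := Real.rpow_pos_of_pos hlam _
    have h2p : (0:ℝ) < (2:ℝ) ^ (α - 1) := Real.rpow_pos_of_pos two_pos _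
    have h2' : (2:ℝ) ^ α = 2 * 2 ^ (α - 1) := by
      rw [show α = 1 + (α - 1) by ring, Real.rpow_add two_pos, Real.rpow_one]; norm_num
    have hcalc : 2 ^ α / lam ^ (α - 1) * (t * (lam / 2) ^ (α - 1)) = 2 * t := by
      rw [Real.div_rpow hlam.le (by norm_num : (0:ℝ) ≤ 2)]
      field_simp
      rw [h2']
      ring
    have : 2 * t ≤ 2 ^ α / lam ^ (α - 1) * t ^ α := by
      rw [← hcalc]
      exact mul_le_mul_of_nonneg_left hstep hC
    have ht2 : ‖y‖ - lam / 2 ≤ t := by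
      have := norm_sub_norm_le y x
      simp only [ht]
      linarith
    linarith

/-- bias of the clipped estimator:
`‖E[clip(X,λ)] − x‖ ≤ 2^α σ^α / λ^{α−1}`. -/
theorem clip_bias_bound {d : ℕ} {Ω : Type*} [MeasurableSpace Ω]
    (μ : Measure Ω) [IsProbabilityMeasure μ]
    (X : Ω → EuclideanSpace ℝ (Fin d)) (hX : Integrable X μ)
    (x : EuclideanSpace ℝ (Fin d)) (hmean : ∫ ω, X ω ∂μ = x)
    (σ α lam : ℝ) (hσ : 0 ≤ σ) (hα₁ : 1 < α) (hα₂ : α ≤ 2) (hlam : 0 < lam)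
    (hmom_int : Integrable (fun ω => ‖X ω - x‖ ^ α) μ)
    (hmom : ∫ ω, ‖X ω - x‖ ^ α ∂μ ≤ σ ^ α)
    (hx : ‖x‖ ≤ lam / 2) :
    ‖(∫ ω, clip lam (X ω) ∂μ) - x‖ ≤ 2 ^ α * σ ^ α / lam ^ (α - 1) := by
  have hC : 0 ≤ 2 ^ α / lam ^ (α - 1) :=
    div_nonneg (Real.rpow_nonneg (by norm_num) _) (Real.rpow_nonneg hlam.le _)
  -- measurability of clip
  have hclip_meas : Measurable (clip lam (d := d)) := by
    unfold clip
    exact (measurable_const.min (measurable_const.div measurable_norm)).smul measurable_id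
  have hmeas : AEStronglyMeasurable (fun ω => clip lam (X ω)) μ :=
    (hclip_meas.comp_aemeasurable hX.aemeasurable).aestronglyMeasurable
  have hbound : ∀ y : EuclideanSpace ℝ (Fin d), ‖clip lam y‖ ≤ lam := by
    intro y
    rcases eq_or_ne y 0 with rfl | hy
    · simp [clip]; exact hlam.le
    · have hny : 0 < ‖y‖ := norm_pos_iff.mpr hy
      rw [clip, norm_smul, Real.norm_eq_abs]
      rcases le_or_gt ‖y‖ lam with h | h
      · have : (1:ℝ) ≤ lam / ‖y‖ := (one_le_div hny).mpr h
        rw [min_eq_left this]; simpa using h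
      · rw [min_eq_right ((div_lt_one hny).mpr h).le,
          abs_of_nonneg (by positivity), div_mul_cancel₀ _ hny.ne']
  have hclip_int : Integrable (fun ω => clip lam (X ω)) μ :=
    Integrable.mono' (integrable_const lam) hmeas
      (Filter.Eventually.of_forall fun ω => hbound (X ω))
  have hsub : (∫ ω, clip lam (X ω) ∂μ) - x = ∫ ω, (clip lam (X ω) - X ω) ∂μ := by
    rw [integral_sub hclip_int hX, hmean]
  rw [hsub]
  calc ‖∫ ω, (clip lam (X ω) - X ω) ∂μ‖
      ≤ ∫ ω, ‖clip lam (X ω) - X ω‖ ∂μ := norm_integral_le_integral_norm _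
    _ ≤ ∫ ω, 2 ^ α / lam ^ (α - 1) * ‖X ω - x‖ ^ α ∂μ := by
        refine integral_mono ((hclip_int.sub hX).norm) (hmom_int.const_mul _) ?_
        intro ω
        exact clip_key hα₁ hlam x (X ω) hx
    _ = 2 ^ α / lam ^ (α - 1) * ∫ ω, ‖X ω - x‖ ^ α ∂μ := integral_const_mul _ _
    _ ≤ 2 ^ α / lam ^ (α - 1) * σ ^ α := mul_le_mul_of_nonneg_left hmom hC
    _ = 2 ^ α * σ ^ α / lam ^ (α - 1) := by ring
end

section
/- Let X be a random vector in ℝ^d with E[X] = x, E[‖X − x‖^α] ≤ σ^α for some σ ≥ 0 and α ∈ (1,2], and ‖x‖ ≤ λ/2 for some λ > 0. Then E[‖clip(X,λ) − E[clip(X,λ)]‖²] ≤ 18 λ^{2−α} σ^α. -/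
/-!
Because `‖x‖ ≤ λ/2`, the clipped vector satisfies both `‖clip(X) - x‖ ≤ 3‖X - x‖` and
`‖clip(X) - x‖ ≤ 3λ/2`. Interpolating between these two bounds,
`‖clip(X) - x‖² ≤ (3λ/2)^{2-α} (3‖X - x‖)^α`, and taking expectations bounds the second moment of
`clip(X)` about `x`, which dominates its variance.
-/

open MeasureTheory

section Variance

variable {Ω E : Type*} [MeasurableSpace Ω] {μ : Measure Ω} [IsProbabilityMeasure μ]
  [NormedAddCommGroup E] [InnerProductSpace ℝ E] [CompleteSpace E]

theorem integral_norm_sub_sq_eq_add {Y : Ω → E} (hY : MemLp Y 2 μ) (c : E) :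
    ∫ ω, ‖Y ω - c‖ ^ 2 ∂μ = ∫ ω, ‖Y ω - ∫ ω', Y ω' ∂μ‖ ^ 2 ∂μ + ‖∫ ω, Y ω ∂μ - c‖ ^ 2 := by
  set m := ∫ ω, Y ω ∂μ
  have hYm : MemLp (fun ω => Y ω - m) 2 μ := hY.sub (memLp_const m)
  have hint : Integrable (fun ω => Y ω - m) μ := hYm.integrable one_le_two
  have hcross : ∫ ω, inner ℝ (m - c) (Y ω - m) ∂μ = 0 := by
    rw [integral_inner hint, integral_sub (hY.integrable one_le_two) (integrable_const m),
      integral_const, probReal_univ, one_smul, sub_self, inner_zero_right]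
  have hsplit : ∀ ω, ‖Y ω - c‖ ^ 2
      = ‖Y ω - m‖ ^ 2 + 2 * inner ℝ (m - c) (Y ω - m) + ‖m - c‖ ^ 2 := fun ω => by
    rw [← sub_add_sub_cancel (Y ω) m c, norm_add_sq_real, real_inner_comm]
  have hsq : Integrable (fun ω => ‖Y ω - m‖ ^ 2) μ := hYm.integrable_norm_pow two_ne_zero
  have hlin : Integrable (fun ω => 2 * inner ℝ (m - c) (Y ω - m)) μ :=
    (hint.const_inner _).const_mul 2
  have hsum : Integrable (fun ω => ‖Y ω - m‖ ^ 2 + 2 * inner ℝ (m - c) (Y ω - m)) μ :=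
    hsq.add hlin
  simp_rw [hsplit]
  rw [integral_add hsum (integrable_const _), integral_add hsq hlin, integral_const_mul, hcross,
    integral_const, probReal_univ, one_smul, mul_zero, add_zero]

theorem integral_norm_sub_integral_sq_le {Y : Ω → E} (hY : MemLp Y 2 μ) (c : E) :
    ∫ ω, ‖Y ω - ∫ ω', Y ω' ∂μ‖ ^ 2 ∂μ ≤ ∫ ω, ‖Y ω - c‖ ^ 2 ∂μ := by
  rw [integral_norm_sub_sq_eq_add hY c]
  exact le_add_of_nonneg_right (sq_nonneg _)

end Variance

section Clip

variable {d : ℕ} {lam : ℝ}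

theorem measurable_clip : Measurable (clip (d := d) lam) :=
  (measurable_const.min (measurable_const.div measurable_norm)).smul measurable_id

theorem clip_of_norm_le {z : EuclideanSpace ℝ (Fin d)} (h : ‖z‖ ≤ lam) : clip lam z = z := by
  rcases eq_or_ne z 0 with rfl | hz
  · simp [clip]
  · simp [clip, (one_le_div (norm_pos_iff.mpr hz)).mpr h]

theorem norm_clip_le (hlam : 0 ≤ lam) (z : EuclideanSpace ℝ (Fin d)) : ‖clip lam z‖ ≤ lam := by
  rcases eq_or_ne z 0 with rfl | hz
  · simpa [clip] using hlam
  · have hz' : 0 < ‖z‖ := norm_pos_iff.mpr hz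
    rw [clip, norm_smul, Real.norm_of_nonneg (le_min zero_le_one (by positivity))]
    calc min 1 (lam / ‖z‖) * ‖z‖ ≤ lam / ‖z‖ * ‖z‖ := by gcongr; exact min_le_right _ _
      _ = lam := div_mul_cancel₀ _ hz'.ne'

variable {x : EuclideanSpace ℝ (Fin d)}

theorem norm_clip_sub_le_of_norm_le (hx : ‖x‖ ≤ lam / 2) (z : EuclideanSpace ℝ (Fin d)) :
    ‖clip lam z - x‖ ≤ 3 * lam / 2 := by
  have hlam : 0 ≤ lam := by linarith [norm_nonneg x]
  linarith [norm_sub_le (clip lam z) x, norm_clip_le hlam z]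

/-- Either `z` is left unchanged, or `‖z‖ > λ` puts `z` at distance at least `λ/2` from `x`. -/
theorem norm_clip_sub_le_three_mul (hx : ‖x‖ ≤ lam / 2) (z : EuclideanSpace ℝ (Fin d)) :
    ‖clip lam z - x‖ ≤ 3 * ‖z - x‖ := by
  rcases le_or_gt ‖z‖ lam with h | h
  · rw [clip_of_norm_le h]
    linarith [norm_nonneg (z - x)]
  · linarith [norm_sub_norm_le z x, norm_clip_sub_le_of_norm_le hx z]

end Clip

theorem sq_le_rpow_mul_rpow {a b c α : ℝ} (ha : 0 ≤ a) (hac : a ≤ c) (hab : a ≤ b)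
    (hα₀ : 0 ≤ α) (hα₂ : α ≤ 2) : a ^ 2 ≤ c ^ (2 - α) * b ^ α := by
  calc a ^ 2 = a ^ (2 - α) * a ^ α := by
        rw [← Real.rpow_add' ha (by norm_num), sub_add_cancel, Real.rpow_two]
    _ ≤ c ^ (2 - α) * b ^ α :=
      mul_le_mul (Real.rpow_le_rpow ha hac (by linarith)) (Real.rpow_le_rpow ha hab hα₀)
        (by positivity) (Real.rpow_nonneg (ha.trans hac) _)

theorem norm_clip_sub_sq_le {d : ℕ} {lam α : ℝ} {x : EuclideanSpace ℝ (Fin d)}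
    (hx : ‖x‖ ≤ lam / 2) (hα₁ : 1 ≤ α) (hα₂ : α ≤ 2) (z : EuclideanSpace ℝ (Fin d)) :
    ‖clip lam z - x‖ ^ 2 ≤ 18 * lam ^ (2 - α) * ‖z - x‖ ^ α := by
  have hlam : 0 ≤ lam := by linarith [norm_nonneg x]
  have h_three_halves : (3 / 2 : ℝ) ^ (2 - α) ≤ 3 / 2 := by
    simpa using Real.rpow_le_rpow_of_exponent_le (x := 3 / 2) (by norm_num) (by linarith : 2 - α ≤ 1)
  have h_three : (3 : ℝ) ^ α ≤ 9 := by
    calc (3 : ℝ) ^ α ≤ 3 ^ (2 : ℝ) := Real.rpow_le_rpow_of_exponent_le (by norm_num) hα₂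
      _ = 9 := by norm_num [Real.rpow_two]
  calc ‖clip lam z - x‖ ^ 2 ≤ (3 / 2 * lam) ^ (2 - α) * (3 * ‖z - x‖) ^ α :=
        sq_le_rpow_mul_rpow (norm_nonneg _) ((norm_clip_sub_le_of_norm_le hx z).trans_eq (by ring))
          (norm_clip_sub_le_three_mul hx z) (by linarith) hα₂
    _ = ((3 / 2) ^ (2 - α) * 3 ^ α) * (lam ^ (2 - α) * ‖z - x‖ ^ α) := by
        rw [Real.mul_rpow (by norm_num) hlam, Real.mul_rpow (by norm_num) (norm_nonneg _)]; ring
    _ ≤ 18 * (lam ^ (2 - α) * ‖z - x‖ ^ α) := by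
        gcongr
        nlinarith [Real.rpow_nonneg (by norm_num : (0 : ℝ) ≤ 3 / 2) (2 - α),
          Real.rpow_nonneg (by norm_num : (0 : ℝ) ≤ 3) α]
    _ = 18 * lam ^ (2 - α) * ‖z - x‖ ^ α := by ring

theorem clip_variance_bound_general {d : ℕ} {Ω : Type*} [MeasurableSpace Ω]
    (μ : Measure Ω) [IsProbabilityMeasure μ]
    (X : Ω → EuclideanSpace ℝ (Fin d)) (hX : Integrable X μ)
    (x : EuclideanSpace ℝ (Fin d))
    (σ α lam : ℝ) (hα₁ : 1 < α) (hα₂ : α ≤ 2)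
    (hmom_int : Integrable (fun ω => ‖X ω - x‖ ^ α) μ)
    (hmom : ∫ ω, ‖X ω - x‖ ^ α ∂μ ≤ σ ^ α)
    (hx : ‖x‖ ≤ lam / 2) :
    ∫ ω, ‖clip lam (X ω) - ∫ ω', clip lam (X ω') ∂μ‖ ^ 2 ∂μ
      ≤ 18 * lam ^ (2 - α) * σ ^ α := by
  have hlam : 0 ≤ lam := by linarith [norm_nonneg x]
  have hclip : MemLp (fun ω => clip lam (X ω)) 2 μ :=
    .of_bound (measurable_clip.comp_aemeasurable hX.aemeasurable).aestronglyMeasurable lam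
      (ae_of_all _ fun ω => norm_clip_le hlam (X ω))
  calc ∫ ω, ‖clip lam (X ω) - ∫ ω', clip lam (X ω') ∂μ‖ ^ 2 ∂μ
      ≤ ∫ ω, ‖clip lam (X ω) - x‖ ^ 2 ∂μ := integral_norm_sub_integral_sq_le hclip x
    _ ≤ ∫ ω, 18 * lam ^ (2 - α) * ‖X ω - x‖ ^ α ∂μ :=
        integral_mono ((hclip.sub (memLp_const x)).integrable_norm_pow two_ne_zero)
          (hmom_int.const_mul _) fun ω => norm_clip_sub_sq_le hx hα₁.le hα₂ (X ω)
    _ = 18 * lam ^ (2 - α) * ∫ ω, ‖X ω - x‖ ^ α ∂μ := integral_const_mul _ _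
    _ ≤ 18 * lam ^ (2 - α) * σ ^ α := by gcongr

/-- variance of the clipped estimator:
`E[‖clip(X,λ) − E[clip(X,λ)]‖²] ≤ 18 λ^{2−α} σ^α`. -/
theorem clip_variance_bound {d : ℕ} {Ω : Type*} [MeasurableSpace Ω]
    (μ : Measure Ω) [IsProbabilityMeasure μ]
    (X : Ω → EuclideanSpace ℝ (Fin d)) (hX : Integrable X μ)
    (x : EuclideanSpace ℝ (Fin d)) (hmean : ∫ ω, X ω ∂μ = x)
    (σ α lam : ℝ) (hσ : 0 ≤ σ) (hα₁ : 1 < α) (hα₂ : α ≤ 2) (hlam : 0 < lam)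
    (hmom_int : Integrable (fun ω => ‖X ω - x‖ ^ α) μ)
    (hmom : ∫ ω, ‖X ω - x‖ ^ α ∂μ ≤ σ ^ α)
    (hx : ‖x‖ ≤ lam / 2) :
    ∫ ω, ‖clip lam (X ω) - ∫ ω', clip lam (X ω') ∂μ‖ ^ 2 ∂μ
      ≤ 18 * lam ^ (2 - α) * σ ^ α :=
  clip_variance_bound_general μ X hX x σ α lam hα₁ hα₂ hmom_int hmom hx
end

section
/- Let F : ℝ^d → ℝ^d be an operator, x* a point with ⟨F(x) − F(x*), x − x*⟩ ≥ μ‖x − x*‖² (quasi-strong monotonicity with μ ≥ 0) and ‖F(x) − F(x*)‖² ≤ ℓ⟨F(x) − F(x*), x − x*⟩ (star-cocoercivity) for all x in some set containing the iterates. Let Ψ be proper closed convex with x* = prox_{γΨ}(x* − γF(x*)), let 0 < γ ≤ 1/ℓ, and define x^{k+1} = prox_{γΨ}(x^k − γ(F(x*) + ĝ^k)) where ĝ^k is any vector and ω_k := F(x^k) − F(x*) − ĝ^k. Then ‖x^{k+1} − x*‖² ≤ (1 − γμ)‖x^k − x*‖² + 2γ⟨x^k − x* − γ(F(x^k) − F(x*)),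 ω_k⟩ + γ²‖ω_k‖². -/
open scoped RealInnerProductSpace

section Aux
variable {E : Type*} [NormedAddCommGroup E] [InnerProductSpace ℝ E]

lemma combo_norm_sq (x y : E) (t : ℝ) :
    ‖(1 - t) • x + t • y‖ ^ 2
      = (1 - t) * ‖x‖ ^ 2 + t * ‖y‖ ^ 2 - t * (1 - t) * ‖x - y‖ ^ 2 := by
  have h : ∀ v : E, ‖v‖ ^ 2 = ⟪v, v⟫ := fun v => (real_inner_self_eq_norm_sq v).symm
  simp only [h, inner_add_left, inner_add_right, inner_sub_left, inner_sub_right,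
    real_inner_smul_left, real_inner_smul_right, real_inner_comm x y]
  ring

lemma prox_strong (Ψ : E → ℝ) (hΨ : ConvexOn ℝ Set.univ Ψ) (γ : ℝ) (hγ : 0 ≤ γ)
    (a u : E) (h : ∀ y, γ * Ψ u + ‖u - a‖ ^ 2 / 2 ≤ γ * Ψ y + ‖y - a‖ ^ 2 / 2)
    (y : E) :
    γ * Ψ u + ‖u - a‖ ^ 2 / 2 + ‖y - u‖ ^ 2 / 2 ≤ γ * Ψ y + ‖y - a‖ ^ 2 / 2 := by
  have key : ∀ t : ℝ, 0 < t → t < 1 →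
      γ * Ψ u + ‖u - a‖ ^ 2 / 2 + (1 - t) * ‖y - u‖ ^ 2 / 2
        ≤ γ * Ψ y + ‖y - a‖ ^ 2 / 2 := by
    intro t ht ht1
    have hz := h ((1 - t) • u + t • y)
    have hΨz : Ψ ((1 - t) • u + t • y) ≤ (1 - t) * Ψ u + t * Ψ y := by
      have := hΨ.2 (Set.mem_univ u) (Set.mem_univ y) (by linarith : (0:ℝ) ≤ 1 - t)
        (le_of_lt ht) (by ring)
      simpa using this
    have hnorm : ‖(1 - t) • u + t • y - a‖ ^ 2
        = (1 - t) * ‖u - a‖ ^ 2 + t * ‖y - a‖ ^ 2 - t * (1 - t) * ‖u - y‖ ^ 2 := by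
      have := combo_norm_sq (u - a) (y - a) t
      have e : (1 - t) • (u - a) + t • (y - a) = (1 - t) • u + t • y - a := by
        module
      rw [e] at this
      simpa using this
    have huy : ‖u - y‖ = ‖y - u‖ := norm_sub_rev u y
    rw [hnorm, huy] at hz
    have hmul : γ * Ψ ((1 - t) • u + t • y) ≤ γ * ((1 - t) * Ψ u + t * Ψ y) :=
      mul_le_mul_of_nonneg_left hΨz hγ
    nlinarith [sq_nonneg ‖y - u‖]
  by_contra hcon
  push_neg at hcon
  set A := γ * Ψ u + ‖u - a‖ ^ 2 / 2
  set B := γ * Ψ y + ‖y - a‖ ^ 2 / 2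
  set C := ‖y - u‖ ^ 2 with hC
  have hC0 : 0 ≤ C := by positivity
  set ε := A + C / 2 - B with hε
  have hε0 : 0 < ε := by simp only [hε]; linarith
  obtain ⟨t, ht0, ht1, htε⟩ : ∃ t : ℝ, 0 < t ∧ t < 1 ∧ t * (C / 2) < ε := by
    refine ⟨min (1/2) (ε / (C + 1)), ?_, ?_, ?_⟩
    · positivity
    · exact lt_of_le_of_lt (min_le_left _ _) (by norm_num)
    · calc min (1/2) (ε / (C + 1)) * (C / 2) ≤ ε / (C + 1) * (C / 2) := by
            apply mul_le_mul_of_nonneg_right (min_le_right _ _); positivity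
        _ < ε := by
            rw [div_mul_eq_mul_div, div_lt_iff₀ (by positivity)]
            nlinarith
  linarith [key t ht0 ht1]

lemma prox_firm (Ψ : E → ℝ) (hΨ : ConvexOn ℝ Set.univ Ψ) (γ : ℝ) (hγ : 0 ≤ γ)
    (a b u v : E)
    (ha : ∀ y, γ * Ψ u + ‖u - a‖ ^ 2 / 2 ≤ γ * Ψ y + ‖y - a‖ ^ 2 / 2)
    (hb : ∀ y, γ * Ψ v + ‖v - b‖ ^ 2 / 2 ≤ γ * Ψ y + ‖y - b‖ ^ 2 / 2) :
    ‖u - v‖ ^ 2 ≤ ‖a - b‖ ^ 2 := by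
  have h1 := prox_strong Ψ hΨ γ hγ a u ha v
  have h2 := prox_strong Ψ hΨ γ hγ b v hb u
  have hn : ∀ w : E, ‖w‖ ^ 2 = ⟪w, w⟫ := fun w => (real_inner_self_eq_norm_sq w).symm
  have key : ‖u - v‖ ^ 2 ≤ ⟪u - v, a - b⟫ := by
    have e1 : ‖v - a‖ ^ 2 - ‖u - a‖ ^ 2 + ‖u - b‖ ^ 2 - ‖v - b‖ ^ 2
        - 2 * ‖u - v‖ ^ 2 = 2 * ⟪u - v, a - b⟫ - 2 * ‖u - v‖ ^ 2 := by
      simp only [hn, inner_sub_left, inner_sub_right, real_inner_comm u a,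
        real_inner_comm v a, real_inner_comm u b, real_inner_comm v b,
        real_inner_comm u v]
      ring
    have huv : ‖v - u‖ = ‖u - v‖ := norm_sub_rev v u
    rw [huv] at h1
    nlinarith
  have hcs : ⟪u - v, a - b⟫ ≤ ‖u - v‖ * ‖a - b‖ := real_inner_le_norm _ _
  nlinarith [norm_nonneg (u - v), norm_nonneg (a - b), sq_nonneg (‖u - v‖ - ‖a - b‖)]


end Aux

/-- one-step descent inequality for `Prox-clipped-SGDA-star`.
Here `x* = prox_{γΨ}(x* − γF(x*))` and `x^{k+1} = prox_{γΨ}(x^k − γ(F(x*) + ĝ^k))`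
are characterized as minimizers of the corresponding proximal objectives, and
`ω_k = F(x^k) − F(x*) − ĝ^k`. -/
theorem prox_clipped_SGDA_star_step {d : ℕ}
    (F : EuclideanSpace ℝ (Fin d) → EuclideanSpace ℝ (Fin d))
    (Ψ : EuclideanSpace ℝ (Fin d) → ℝ)
    (hΨ : ConvexOn ℝ Set.univ Ψ) (hlsc : LowerSemicontinuous Ψ)
    (Q : Set (EuclideanSpace ℝ (Fin d)))
    (xs xk xk1 g : EuclideanSpace ℝ (Fin d))
    (μ ℓ γ : ℝ) (hμ : 0 ≤ μ) (hℓ : 0 < ℓ) (hγ : 0 < γ) (hγℓ : γ ≤ 1 / ℓ)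
    (hxk : xk ∈ Q) (hxs : xs ∈ Q)
    (hqsm : ∀ x ∈ Q, ⟪F x - F xs, x - xs⟫ ≥ μ * ‖x - xs‖ ^ 2)
    (hstar : ∀ x ∈ Q, ‖F x - F xs‖ ^ 2 ≤ ℓ * ⟪F x - F xs, x - xs⟫)
    (hfix : ∀ y, γ * Ψ xs + ‖xs - (xs - γ • F xs)‖ ^ 2 / 2
        ≤ γ * Ψ y + ‖y - (xs - γ • F xs)‖ ^ 2 / 2)
    (hupd : ∀ y, γ * Ψ xk1 + ‖xk1 - (xk - γ • (F xs + g))‖ ^ 2 / 2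
        ≤ γ * Ψ y + ‖y - (xk - γ • (F xs + g))‖ ^ 2 / 2) :
    ‖xk1 - xs‖ ^ 2 ≤ (1 - γ * μ) * ‖xk - xs‖ ^ 2
      + 2 * γ * ⟪xk - xs - γ • (F xk - F xs), F xk - F xs - g⟫
      + γ ^ 2 * ‖F xk - F xs - g‖ ^ 2 := by
  set p := xk - xs - γ • (F xk - F xs) with hp
  set ω := F xk - F xs - g with hω
  have hne : ‖xs - xk1‖ ^ 2 ≤ ‖(xs - γ • F xs) - (xk - γ • (F xs + g))‖ ^ 2 :=
    prox_firm Ψ hΨ γ hγ.le _ _ xs xk1 hfix hupd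
  have hed : (xs - γ • F xs) - (xk - γ • (F xs + g)) = -(p + γ • ω) := by
    simp only [hp, hω]; module
  rw [hed, norm_neg, norm_sub_rev] at hne
  have hexp : ‖p + γ • ω‖ ^ 2 = ‖p‖ ^ 2 + 2 * γ * ⟪p, ω⟫ + γ ^ 2 * ‖ω‖ ^ 2 := by
    rw [norm_add_sq_real, real_inner_smul_right, norm_smul]
    simp [mul_pow, sq_abs]; ring
  have hpexp : ‖p‖ ^ 2 = ‖xk - xs‖ ^ 2 - 2 * γ * ⟪F xk - F xs, xk - xs⟫
      + γ ^ 2 * ‖F xk - F xs‖ ^ 2 := by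
    rw [hp, norm_sub_sq_real, real_inner_smul_right, norm_smul,
      real_inner_comm]
    simp [mul_pow, sq_abs]; ring
  have hq := hqsm xk hxk
  have hs := hstar xk hxk
  have hI0 : (0:ℝ) ≤ ⟪F xk - F xs, xk - xs⟫ :=
    le_trans (by positivity) hq
  have hγℓ1 : γ * ℓ ≤ 1 := by
    rw [le_div_iff₀ hℓ] at hγℓ; linarith
  rw [hexp, hpexp] at hne
  nlinarith [mul_le_mul_of_nonneg_left hs (sq_nonneg γ),
    mul_le_mul_of_nonneg_left hq (le_of_lt hγ),
    mul_nonneg (mul_nonneg hγ.le hI0) (sub_nonneg.2 hγℓ1)]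
end

section
/- Let F : ℝ^d → ℝ^d satisfy monotonicity ⟨F(x) − F(y), x − y⟩ ≥ 0 and ℓ-cocoercivity ‖F(x) − F(y)‖² ≤ ℓ⟨F(x) − F(y), x − y⟩ on a set Q, let Ψ be proper closed convex, 0 < γ ≤ 1/ℓ, and let x^{k+1} = prox_{γΨ}(x^k − γ g̃^k) with ω_k := F(x^k) − g̃^k. Then for every u ∈ Q (assuming x^k, x^{k+1} ∈ Q): 2γ(⟨F(u), x^{k+1} − u⟩ + Ψ(x^{k+1}) − Ψ(u)) ≤ ‖x^k − u‖² − ‖x^{k+1} − u‖² + 2γ⟨ω_k, x^k − u⟩ + 2γ²‖ω_k‖². -/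
open scoped RealInnerProductSpace

set_option maxHeartbeats 1000000

/-- one-step gap inequality for proximal clipped SGDA under monotonicity
and `ℓ`-cocoercivity of `F` on `Q`, with `x^{k+1} = prox_{γΨ}(x^k − γ g̃^k)`
characterized as a minimizer of the proximal objective, and `ω_k = F(x^k) − g̃^k`. -/
theorem prox_clipped_SGDA_gap_step {d : ℕ}
    (F : EuclideanSpace ℝ (Fin d) → EuclideanSpace ℝ (Fin d))
    (Ψ : EuclideanSpace ℝ (Fin d) → ℝ)
    (hΨ : ConvexOn ℝ Set.univ Ψ) (hlsc : LowerSemicontinuous Ψ)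
    (Q : Set (EuclideanSpace ℝ (Fin d)))
    (ℓ γ : ℝ) (hℓ : 0 < ℓ) (hγ : 0 < γ) (hγℓ : γ ≤ 1 / ℓ)
    (hmono : ∀ x ∈ Q, ∀ y ∈ Q, 0 ≤ ⟪F x - F y, x - y⟫)
    (hcoco : ∀ x ∈ Q, ∀ y ∈ Q, ‖F x - F y‖ ^ 2 ≤ ℓ * ⟪F x - F y, x - y⟫)
    (xk xk1 g : EuclideanSpace ℝ (Fin d)) (hxk : xk ∈ Q) (hxk1 : xk1 ∈ Q)
    (hupd : ∀ y, γ * Ψ xk1 + ‖xk1 - (xk - γ • g)‖ ^ 2 / 2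
        ≤ γ * Ψ y + ‖y - (xk - γ • g)‖ ^ 2 / 2) :
    ∀ u ∈ Q, 2 * γ * (⟪F u, xk1 - u⟫ + Ψ xk1 - Ψ u)
      ≤ ‖xk - u‖ ^ 2 - ‖xk1 - u‖ ^ 2 + 2 * γ * ⟪F xk - g, xk - u⟫
        + 2 * γ ^ 2 * ‖F xk - g‖ ^ 2 := by
  intro u hu
  -- Key inequality from the prox characterization:
  have hkey : γ * Ψ xk1 - γ * Ψ u - ⟪xk1 - (xk - γ • g), u - xk1⟫ ≤ 0 := by
    set z := xk - γ • g with hzdef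
    have ht : ∀ t : ℝ, 0 < t → t ≤ 1 →
        γ * Ψ xk1 - γ * Ψ u - ⟪xk1 - z, u - xk1⟫ ≤ t * (‖u - xk1‖ ^ 2 / 2) := by
      intro t ht0 ht1
      have hy := hupd (xk1 + t • (u - xk1))
      have hpt : xk1 + t • (u - xk1) = (1 - t) • xk1 + t • u := by
        rw [smul_sub, sub_smul, one_smul]; abel
      have hconv := hΨ.2 (Set.mem_univ xk1) (Set.mem_univ u)
        (by linarith : (0:ℝ) ≤ 1 - t) ht0.le (by ring)
      rw [← hpt] at hconv
      simp only [smul_eq_mul] at hconv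
      have hnorm : ‖xk1 + t • (u - xk1) - z‖ ^ 2
          = ‖xk1 - z‖ ^ 2 + 2 * (t * ⟪xk1 - z, u - xk1⟫) + t ^ 2 * ‖u - xk1‖ ^ 2 := by
        rw [show xk1 + t • (u - xk1) - z = (xk1 - z) + t • (u - xk1) by abel,
          norm_add_sq_real, real_inner_smul_right, norm_smul]
        rw [Real.norm_eq_abs, mul_pow, sq_abs]
      rw [hnorm] at hy
      have h2 : t * (γ * Ψ xk1 - γ * Ψ u - ⟪xk1 - z, u - xk1⟫)
          ≤ t * (t * (‖u - xk1‖ ^ 2 / 2)) := by nlinarith [hy, hconv, hγ.le]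
      exact le_of_mul_le_mul_left h2 ht0
    by_contra hcon
    push_neg at hcon
    set A := γ * Ψ xk1 - γ * Ψ u - ⟪xk1 - z, u - xk1⟫ with hA
    set C := ‖u - xk1‖ ^ 2 / 2 with hC
    have hC0 : 0 ≤ C := by positivity
    have htpos : 0 < min 1 (A / (C + 1)) :=
      lt_min one_pos (div_pos hcon (by linarith))
    have h1 := ht _ htpos (min_le_left _ _)
    have h3 : min 1 (A / (C + 1)) * C ≤ A / (C + 1) * C :=
      mul_le_mul_of_nonneg_right (min_le_right _ _) hC0
    have h4 : A / (C + 1) * C < A := by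
      rw [div_mul_eq_mul_div, div_lt_iff₀ (by linarith : (0:ℝ) < C + 1)]
      nlinarith
    linarith
  -- Inner product identities
  have e1 : ⟪xk1 - (xk - γ • g), u - xk1⟫
      = ⟪xk1 - xk, u - xk1⟫ + γ * ⟪g, u - xk1⟫ := by
    rw [show xk1 - (xk - γ • g) = (xk1 - xk) + γ • g by abel, inner_add_left,
      real_inner_smul_left]
  have e2 : 2 * ⟪xk1 - xk, u - xk1⟫
      = ‖xk - u‖ ^ 2 - ‖xk1 - u‖ ^ 2 - ‖xk1 - xk‖ ^ 2 := by
    have h := norm_add_sq_real (xk - xk1) (xk1 - u)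
    rw [show xk - xk1 + (xk1 - u) = xk - u by abel] at h
    have h2 : ⟪xk - xk1, xk1 - u⟫ = ⟪xk1 - xk, u - xk1⟫ := by
      rw [← inner_neg_neg, show -(xk - xk1) = xk1 - xk by abel,
        show -(xk1 - u) = u - xk1 by abel]
    rw [h2, norm_sub_rev xk xk1] at h
    linarith
  have e3 : ⟪g, u - xk1⟫ = ⟪F xk, u - xk1⟫ - ⟪F xk - g, u - xk1⟫ := by
    rw [inner_sub_left]; ring
  have e4 : ⟪F xk - g, u - xk1⟫
      = -⟪F xk - g, xk - u⟫ + ⟪F xk - g, xk - xk1⟫ := by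
    rw [show u - xk1 = -(xk - u) + (xk - xk1) by abel, inner_add_right, inner_neg_right]
  have e5 : ⟪F xk, u - xk1⟫ = -⟪F xk, xk1 - u⟫ := by
    rw [show u - xk1 = -(xk1 - u) by abel, inner_neg_right]
  have e8 : ⟪F xk - g, xk - xk1⟫ = -⟪F xk - g, xk1 - xk⟫ := by
    rw [show xk - xk1 = -(xk1 - xk) by abel, inner_neg_right]
  have e6 : ⟪F u, xk1 - u⟫ = ⟪F xk, xk1 - u⟫ - ⟪F xk - F u, xk1 - u⟫ := by
    rw [inner_sub_left]; ring
  have e7 : ⟪F xk - F u, xk1 - u⟫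
      = ⟪F xk - F u, xk - u⟫ + ⟪F xk - F u, xk1 - xk⟫ := by
    rw [show xk1 - u = (xk - u) + (xk1 - xk) by abel, inner_add_right]
  rw [e1, e3, e4, e5, e8] at hkey
  rw [e6, e7]
  -- Cocoercivity consequences
  have hcoc := hcoco xk hxk u hu
  have hs : 0 ≤ ⟪F xk - F u, xk - u⟫ := by nlinarith [sq_nonneg ‖F xk - F u‖]
  have hγℓ' : γ * ℓ ≤ 1 := by
    rw [le_div_iff₀ hℓ] at hγℓ; exact hγℓ
  have hco2 : 2 * γ ^ 2 * ‖F xk - F u‖ ^ 2 ≤ 2 * γ * ⟪F xk - F u, xk - u⟫ := by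
    have h1 := mul_le_mul_of_nonneg_left hcoc (by positivity : (0:ℝ) ≤ 2 * γ ^ 2)
    have h2 : 0 ≤ 2 * γ * ⟪F xk - F u, xk - u⟫ * (1 - γ * ℓ) :=
      mul_nonneg (mul_nonneg (by linarith) hs) (by linarith)
    nlinarith [h1, h2]
  -- Young inequalities
  have hY1 : 2 * γ * ⟪F xk - g, xk1 - xk⟫
      ≤ 2 * γ ^ 2 * ‖F xk - g‖ ^ 2 + ‖xk1 - xk‖ ^ 2 / 2 := by
    have hle : ⟪F xk - g, xk1 - xk⟫ ≤ ‖F xk - g‖ * ‖xk1 - xk‖ := real_inner_le_norm _ _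
    nlinarith [mul_le_mul_of_nonneg_left hle (by linarith : (0:ℝ) ≤ 2 * γ),
      sq_nonneg (2 * γ * ‖F xk - g‖ - ‖xk1 - xk‖)]
  have hY2 : -(2 * γ * ⟪F xk - F u, xk1 - xk⟫)
      ≤ 2 * γ ^ 2 * ‖F xk - F u‖ ^ 2 + ‖xk1 - xk‖ ^ 2 / 2 := by
    have habs := abs_real_inner_le_norm (F xk - F u) (xk1 - xk)
    have hle : -⟪F xk - F u, xk1 - xk⟫ ≤ ‖F xk - F u‖ * ‖xk1 - xk‖ := by
      have := neg_abs_le ⟪F xk - F u, xk1 - xk⟫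
      linarith
    nlinarith [mul_le_mul_of_nonneg_left hle (by linarith : (0:ℝ) ≤ 2 * γ),
      sq_nonneg (2 * γ * ‖F xk - F u‖ - ‖xk1 - xk‖)]
  linarith [hkey, e2, hco2, hY1, hY2]
end

section
/- Let F : ℝ^d → ℝ^d be L-Lipschitz and monotone on a set Q, let Ψ be proper closed convex, and 0 < γ ≤ 1/(√12 L). Given x^k, define x̃^k = prox_{γΨ}(x^k − γ g̃^k) and x^{k+1} = prox_{γΨ}(x^k − γ ĝ^k), and set θ_k = F(x̃^k) − ĝ^k, ω_k = F(x^k) − g̃^k. Then for all u ∈ Q (assuming x^k, x̃^k, x^{k+1} ∈ Q): γ(⟨F(u), x̃^k − u⟩ + Ψ(x̃^k) − Ψ(u)) ≤ ½‖x^k − u‖² − ½‖x^{k+1} − u‖² + 3γ²‖ω_k‖² + 4γ²‖θ_k‖² + γ⟨θ_k, x^k − u⟩. -/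
open scoped RealInnerProductSpace

private lemma prox_subgrad {d : ℕ}
    (Ψ : EuclideanSpace ℝ (Fin d) → ℝ)
    (hΨ : ConvexOn ℝ Set.univ Ψ)
    (γ : ℝ) (hγ : 0 < γ) (z p : EuclideanSpace ℝ (Fin d))
    (hmin : ∀ y, γ * Ψ p + ‖p - z‖ ^ 2 / 2 ≤ γ * Ψ y + ‖y - z‖ ^ 2 / 2) :
    ∀ y, γ * (Ψ p - Ψ y) ≤ ⟪p - z, y - p⟫ := by
  intro y
  rcases eq_or_ne y p with rfl | hy
  · simp
  have hn : (0 : ℝ) < ‖y - p‖ := norm_pos_iff.mpr (sub_ne_zero.mpr hy)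
  have hn2 : (0 : ℝ) < ‖y - p‖ ^ 2 := by positivity
  apply le_of_forall_pos_le_add
  intro ε hε
  set t : ℝ := min 1 (2 * ε / ‖y - p‖ ^ 2) with ht
  have ht0 : 0 < t := lt_min one_pos (by positivity)
  have ht1 : t ≤ 1 := min_le_left _ _
  have hte : t * ‖y - p‖ ^ 2 ≤ 2 * ε := by
    calc t * ‖y - p‖ ^ 2 ≤ (2 * ε / ‖y - p‖ ^ 2) * ‖y - p‖ ^ 2 :=
          mul_le_mul_of_nonneg_right (min_le_right _ _) (by positivity)
      _ = 2 * ε := by field_simp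
  have hconv : Ψ ((1 - t) • p + t • y) ≤ (1 - t) * Ψ p + t * Ψ y :=
    hΨ.2 (Set.mem_univ p) (Set.mem_univ y) (by linarith) ht0.le (by ring)
  have hm := hmin ((1 - t) • p + t • y)
  have hexp : ‖(1 - t) • p + t • y - z‖ ^ 2
      = ‖p - z‖ ^ 2 + 2 * (t * ⟪p - z, y - p⟫) + t ^ 2 * ‖y - p‖ ^ 2 := by
    have hv : (1 - t) • p + t • y - z = (p - z) + t • (y - p) := by module
    rw [hv, norm_add_sq_real, real_inner_smul_right, norm_smul, mul_pow,
      Real.norm_eq_abs, sq_abs]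
  rw [hexp] at hm
  have hconv' : γ * Ψ ((1 - t) • p + t • y) ≤ γ * ((1 - t) * Ψ p + t * Ψ y) :=
    mul_le_mul_of_nonneg_left hconv hγ.le
  have key : t * (γ * (Ψ p - Ψ y)) ≤ t * (⟪p - z, y - p⟫ + t / 2 * ‖y - p‖ ^ 2) := by
    nlinarith [hm, hconv']
  have key2 : γ * (Ψ p - Ψ y) ≤ ⟪p - z, y - p⟫ + t / 2 * ‖y - p‖ ^ 2 :=
    le_of_mul_le_mul_left key ht0
  nlinarith [key2, hte]

set_option maxHeartbeats 2000000 in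
/-- one-step extragradient-type inequality for the proximal clipped
stochastic extragradient method, with `x̃^k = prox_{γΨ}(x^k − γ g̃^k)` and
`x^{k+1} = prox_{γΨ}(x^k − γ ĝ^k)` characterized as minimizers of the proximal
objectives, `θ_k = F(x̃^k) − ĝ^k` and `ω_k = F(x^k) − g̃^k`. -/
theorem prox_clipped_SEG_step {d : ℕ}
    (F : EuclideanSpace ℝ (Fin d) → EuclideanSpace ℝ (Fin d))
    (Ψ : EuclideanSpace ℝ (Fin d) → ℝ)
    (hΨ : ConvexOn ℝ Set.univ Ψ) (hlsc : LowerSemicontinuous Ψ)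
    (Q : Set (EuclideanSpace ℝ (Fin d)))
    (L γ : ℝ) (hL : 0 < L) (hγ : 0 < γ) (hγL : γ ≤ 1 / (Real.sqrt 12 * L))
    (hLip : ∀ x ∈ Q, ∀ y ∈ Q, ‖F x - F y‖ ≤ L * ‖x - y‖)
    (hmono : ∀ x ∈ Q, ∀ y ∈ Q, 0 ≤ ⟪F x - F y, x - y⟫)
    (xk xt xk1 gt gh : EuclideanSpace ℝ (Fin d))
    (hxk : xk ∈ Q) (hxt : xt ∈ Q) (hxk1 : xk1 ∈ Q)
    (hxt_upd : ∀ y, γ * Ψ xt + ‖xt - (xk - γ • gt)‖ ^ 2 / 2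
        ≤ γ * Ψ y + ‖y - (xk - γ • gt)‖ ^ 2 / 2)
    (hxk1_upd : ∀ y, γ * Ψ xk1 + ‖xk1 - (xk - γ • gh)‖ ^ 2 / 2
        ≤ γ * Ψ y + ‖y - (xk - γ • gh)‖ ^ 2 / 2) :
    ∀ u ∈ Q, γ * (⟪F u, xt - u⟫ + Ψ xt - Ψ u)
      ≤ ‖xk - u‖ ^ 2 / 2 - ‖xk1 - u‖ ^ 2 / 2
        + 3 * γ ^ 2 * ‖F xk - gt‖ ^ 2 + 4 * γ ^ 2 * ‖F xt - gh‖ ^ 2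
        + γ * ⟪F xt - gh, xk - u⟫ := by
  intro u hu
  have hA := prox_subgrad Ψ hΨ γ hγ (xk - γ • gt) xt hxt_upd xk1
  have hB := prox_subgrad Ψ hΨ γ hγ (xk - γ • gh) xk1 hxk1_upd u
  -- rewrite the two prox inequalities into atom form
  have hA2 : γ * (Ψ xt - Ψ xk1)
      ≤ ⟪xk - xt, xt - xk1⟫ - γ * ⟪gt, xt - xk1⟫ := by
    have e : ⟪xt - (xk - γ • gt), xk1 - xt⟫
        = ⟪xk - xt, xt - xk1⟫ - γ * ⟪gt, xt - xk1⟫ := by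
      simp only [inner_sub_left, inner_sub_right, real_inner_smul_left]
      ring
    linarith [hA, e.le, e.ge]
  have hB2 : γ * (Ψ xk1 - Ψ u)
      ≤ ⟪xk - xk1, xk1 - u⟫ - γ * ⟪gh, xk1 - u⟫ := by
    have e : ⟪xk1 - (xk - γ • gh), u - xk1⟫
        = ⟪xk - xk1, xk1 - u⟫ - γ * ⟪gh, xk1 - u⟫ := by
      simp only [inner_sub_left, inner_sub_right, real_inner_smul_left]
      ring
    linarith [hB, e.le, e.ge]
  -- three-point identities
  have I1 : ⟪xk - xk1, xk1 - u⟫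
      = ‖xk - u‖ ^ 2 / 2 - ‖xk1 - u‖ ^ 2 / 2 - ‖xk - xk1‖ ^ 2 / 2 := by
    have h : ‖xk - u‖ ^ 2
        = ‖xk - xk1‖ ^ 2 + 2 * ⟪xk - xk1, xk1 - u⟫ + ‖xk1 - u‖ ^ 2 := by
      rw [← sub_add_sub_cancel xk xk1 u, norm_add_sq_real]
    linarith
  have I2 : ⟪xk - xt, xt - xk1⟫
      = ‖xk - xk1‖ ^ 2 / 2 - ‖xt - xk1‖ ^ 2 / 2 - ‖xk - xt‖ ^ 2 / 2 := by
    have h : ‖xk - xk1‖ ^ 2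
        = ‖xk - xt‖ ^ 2 + 2 * ⟪xk - xt, xt - xk1⟫ + ‖xt - xk1‖ ^ 2 := by
      rw [← sub_add_sub_cancel xk xt xk1, norm_add_sq_real]
    linarith
  -- linear decompositions (premultiplied by γ)
  have Eq5 : γ * ⟪gt, xt - xk1⟫
      = γ * ⟪F xk, xt - xk1⟫ - γ * ⟪F xk - gt, xt - xk1⟫ := by
    simp only [inner_sub_left]; ring
  have Eq6 : γ * ⟪gh, xk1 - u⟫
      = γ * ⟪F xt, xk1 - u⟫ - γ * ⟪F xt - gh, xk1 - u⟫ := by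
    simp only [inner_sub_left]; ring
  have Eq7 : γ * ⟪F xk, xt - xk1⟫
      = γ * ⟪F xt, xt - xk1⟫ - γ * ⟪F xt - F xk, xt - xk1⟫ := by
    simp only [inner_sub_left]; ring
  have Eq8 : γ * ⟪F xt, xk1 - u⟫
      = γ * ⟪F xt, xt - u⟫ - γ * ⟪F xt, xt - xk1⟫ := by
    simp only [inner_sub_right]; ring
  have Eq9 : γ * ⟪F xt, xt - u⟫
      = γ * ⟪F u, xt - u⟫ + γ * ⟪F xt - F u, xt - u⟫ := by
    simp only [inner_sub_left]; ring
  have Eq10 : γ * ⟪F xt - gh, xk1 - u⟫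
      = γ * ⟪F xt - gh, xk - u⟫ + γ * ⟪F xt - gh, xk1 - xt⟫
        + γ * ⟪F xt - gh, xt - xk⟫ := by
    simp only [inner_sub_left, inner_sub_right]; ring
  -- monotonicity
  have hm : 0 ≤ γ * ⟪F xt - F u, xt - u⟫ :=
    mul_nonneg hγ.le (hmono xt hxt u hu)
  -- step size bound
  have hs : Real.sqrt 12 ^ 2 = 12 := Real.sq_sqrt (by norm_num)
  have hs0 : (0 : ℝ) < Real.sqrt 12 := Real.sqrt_pos.mpr (by norm_num)
  have hγL2 : γ ^ 2 * L ^ 2 ≤ 1 / 12 := by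
    have hpos : 0 < Real.sqrt 12 * L := mul_pos hs0 hL
    have h1 : γ * (Real.sqrt 12 * L) ≤ 1 := by
      calc γ * (Real.sqrt 12 * L) ≤ (1 / (Real.sqrt 12 * L)) * (Real.sqrt 12 * L) :=
            mul_le_mul_of_nonneg_right hγL hpos.le
        _ = 1 := by field_simp
    nlinarith [h1, hs, mul_pos hγ hpos, sq_nonneg (γ * (Real.sqrt 12 * L))]
  -- Lipschitz-Young term
  have lip : γ * ⟪F xt - F xk, xt - xk1⟫
      ≤ ‖xk - xt‖ ^ 2 / 12 + ‖xt - xk1‖ ^ 2 / 4 := by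
    have hcs : ⟪F xt - F xk, xt - xk1⟫ ≤ ‖F xt - F xk‖ * ‖xt - xk1‖ :=
      real_inner_le_norm _ _
    have hl : ‖F xt - F xk‖ ≤ L * ‖xk - xt‖ := by
      rw [norm_sub_rev]; exact hLip xk hxk xt hxt
    have h1 : γ * ⟪F xt - F xk, xt - xk1⟫ ≤ γ * (‖F xt - F xk‖ * ‖xt - xk1‖) :=
      mul_le_mul_of_nonneg_left hcs hγ.le
    have h2 : γ * (‖F xt - F xk‖ * ‖xt - xk1‖) ≤ γ * (L * ‖xk - xt‖ * ‖xt - xk1‖) :=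
      mul_le_mul_of_nonneg_left
        (mul_le_mul_of_nonneg_right hl (norm_nonneg _)) hγ.le
    have h3 : γ ^ 2 * L ^ 2 * ‖xk - xt‖ ^ 2 ≤ (1 / 12) * ‖xk - xt‖ ^ 2 :=
      mul_le_mul_of_nonneg_right hγL2 (sq_nonneg _)
    have h12 := h1.trans h2
    nlinarith [h12, h3, sq_nonneg (γ * L * ‖xk - xt‖ - ‖xt - xk1‖ / 2)]
  -- Young for omega
  have yω : γ * ⟪F xk - gt, xt - xk1⟫
      ≤ 3 * γ ^ 2 * ‖F xk - gt‖ ^ 2 + ‖xt - xk1‖ ^ 2 / 12 := by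
    have h1 : γ * ⟪F xk - gt, xt - xk1⟫ ≤ γ * (‖F xk - gt‖ * ‖xt - xk1‖) :=
      mul_le_mul_of_nonneg_left (real_inner_le_norm _ _) hγ.le
    nlinarith [h1, sq_nonneg (6 * (γ * ‖F xk - gt‖) - ‖xt - xk1‖)]
  -- Young for theta, two pieces
  have yθ1 : γ * ⟪F xt - gh, xk1 - xt⟫
      ≤ 2 * γ ^ 2 * ‖F xt - gh‖ ^ 2 + ‖xt - xk1‖ ^ 2 / 8 := by
    have h1 : γ * ⟪F xt - gh, xk1 - xt⟫ ≤ γ * (‖F xt - gh‖ * ‖xt - xk1‖) := by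
      have := real_inner_le_norm (F xt - gh) (xk1 - xt)
      rw [norm_sub_rev xk1 xt] at this
      exact mul_le_mul_of_nonneg_left this hγ.le
    nlinarith [h1, sq_nonneg (4 * (γ * ‖F xt - gh‖) - ‖xt - xk1‖)]
  have yθ2 : γ * ⟪F xt - gh, xt - xk⟫
      ≤ 2 * γ ^ 2 * ‖F xt - gh‖ ^ 2 + ‖xk - xt‖ ^ 2 / 8 := by
    have h1 : γ * ⟪F xt - gh, xt - xk⟫ ≤ γ * (‖F xt - gh‖ * ‖xk - xt‖) := by
      have := real_inner_le_norm (F xt - gh) (xt - xk)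
      rw [norm_sub_rev xt xk] at this
      exact mul_le_mul_of_nonneg_left this hγ.le
    nlinarith [h1, sq_nonneg (4 * (γ * ‖F xt - gh‖) - ‖xk - xt‖)]
  have n1 : (0:ℝ) ≤ ‖xk - xt‖ ^ 2 := sq_nonneg _
  have n2 : (0:ℝ) ≤ ‖xt - xk1‖ ^ 2 := sq_nonneg _
  linarith [hA2, hB2, I1, I2, Eq5, Eq6, Eq7, Eq8, Eq9, Eq10, hm, lip, yω, yθ1, yθ2, n1, n2]
end

section
/- Let {X_i}_{i≥1} be a martingale difference sequence (E[X_i | X_{i−1},…,X_1] = 0) with |X_i| ≤ c almost surely, and let σ_i² = E[X_i² | X_{i−1},…,X_1]. Then for all b > 0, G > 0, n ≥ 1: P{ |Σ_{i=1}^n X_i| > b and Σ_{i=1}^n σ_i² ≤ G } ≤ 2 exp(−b² / (2G + 2cb/3)). -/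
/-! With `φ(λ) = (exp (λc) - 1 - λc) / c²` (`bernsteinCoeff c λ`), the bound
`exp (λx) ≤ 1 + λx + φ(λ) x²` on `[-c, c]` gives
`E[exp (λ X_i) | ℱ_i] ≤ 1 + φ(λ) σ_i² ≤ exp (φ(λ) σ_i²)`, so `exp (λ S_k - φ(λ) V_k)`
(partial sums of the `X_i` and of the `σ_i²`) is a supermartingale of mean at most `1`.
Markov's inequality on `{S_n > b, V_n ≤ G}` then gives `exp (φ(λ) G - λb)`, and the choice
`λ = 3b / (3G + cb)` together with `(1 - u/3)(exp u - 1 - u) ≤ u²/2` turns this into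
`exp (-b² / (2G + 2cb/3))`. The lower tail is the same bound applied to `-X`. -/

open MeasureTheory ProbabilityTheory Real Set

lemma nonneg_of_hasDerivAt_nonneg {f f' : ℝ → ℝ} (hf : ∀ y, HasDerivAt f (f' y) y)
    (hf0 : f 0 = 0) (hf' : ∀ y, 0 < y → 0 ≤ f' y) {y : ℝ} (hy : 0 ≤ y) : 0 ≤ f y := by
  have hmono : MonotoneOn f (Ici 0) := by
    refine monotoneOn_of_hasDerivWithinAt_nonneg (convex_Ici 0)
      (fun x _ ↦ (hf x).continuousAt.continuousWithinAt) (fun x _ ↦ (hf x).hasDerivWithinAt) ?_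
    rw [interior_Ici]
    exact hf'
  simpa [hf0] using hmono self_mem_Ici hy hy

namespace Real

lemma sub_one_mul_exp_add_one_nonneg (y : ℝ) : 0 ≤ (y - 1) * exp y + 1 := by
  have h := mul_le_mul_of_nonneg_right (add_one_le_exp (-y)) (exp_pos y).le
  rw [← exp_add, neg_add_cancel, exp_zero] at h
  linarith

lemma sub_two_mul_exp_add_add_two_nonneg {y : ℝ} (hy : 0 ≤ y) :
    0 ≤ (y - 2) * exp y + y + 2 := by
  refine nonneg_of_hasDerivAt_nonneg (f := fun y ↦ (y - 2) * exp y + y + 2)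
    (f' := fun y ↦ (y - 1) * exp y + 1) (fun y ↦ ?_) (by simp)
    (fun y _ ↦ sub_one_mul_exp_add_one_nonneg y) hy
  exact ((((hasDerivAt_id' y).sub_const 2).mul (hasDerivAt_exp y)).add
    (hasDerivAt_id' y)).add_const 2 |>.congr_deriv (by ring)

lemma exp_le_quadratic_of_nonpos {x : ℝ} (hx : x ≤ 0) : exp x ≤ 1 + x + x ^ 2 / 2 := by
  have hmono : Monotone fun y ↦ exp y - 1 - y - y ^ 2 / 2 := by
    refine monotone_of_hasDerivAt_nonneg (f' := fun y ↦ exp y - 1 - y) (fun y ↦ ?_)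
      (fun y ↦ by simp only [Pi.zero_apply]; linarith [add_one_le_exp y])
    exact (((hasDerivAt_exp y).sub_const 1).sub (hasDerivAt_id' y)).sub
      ((hasDerivAt_pow 2 y).div_const 2) |>.congr_deriv (by ring)
  have := hmono hx
  norm_num at this
  linarith

lemma monotoneOn_exp_sub_one_sub_div_sq :
    MonotoneOn (fun y ↦ (exp y - 1 - y) / y ^ 2) (Ioi 0) := by
  have hderiv : ∀ y ∈ Ioi (0 : ℝ), HasDerivAt (fun y ↦ (exp y - 1 - y) / y ^ 2)
      (y * ((y - 2) * exp y + y + 2) / y ^ 4) y := fun y hy ↦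
    (((hasDerivAt_exp y).sub_const 1).sub (hasDerivAt_id' y)).div (hasDerivAt_pow 2 y)
      (pow_ne_zero 2 (ne_of_gt hy)) |>.congr_deriv (by simp only [Pi.sub_apply]; ring)
  refine monotoneOn_of_hasDerivWithinAt_nonneg (convex_Ioi 0)
    (f' := fun y ↦ y * ((y - 2) * exp y + y + 2) / y ^ 4)
    (fun y hy ↦ (hderiv y hy).continuousAt.continuousWithinAt) ?_ ?_ <;> rw [interior_Ioi]
  · exact fun y hy ↦ (hderiv y hy).hasDerivWithinAt
  · exact fun y (hy : 0 < y) ↦ div_nonneg (mul_nonneg hy.le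
      (sub_two_mul_exp_add_add_two_nonneg hy.le)) (by positivity)

/- `u²/2 - (1 - u/3)(exp u - 1 - u)` vanishes to second order at `0`, and its second derivative
`((u - 1) exp u + 1) / 3` is nonnegative. -/
lemma one_sub_div_three_mul_exp_sub_one_sub_le {u : ℝ} (hu : 0 ≤ u) :
    (1 - u / 3) * (exp u - 1 - u) ≤ u ^ 2 / 2 := by
  have hderiv_nonneg : ∀ y, 0 ≤ y → 0 ≤ y + (exp y - 1 - y) / 3 - (1 - y / 3) * (exp y - 1) := by
    intro y hy
    refine nonneg_of_hasDerivAt_nonneg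
      (f := fun y ↦ y + (exp y - 1 - y) / 3 - (1 - y / 3) * (exp y - 1))
      (f' := fun y ↦ ((y - 1) * exp y + 1) / 3) (fun y ↦ ?_)
      (by simp) (fun y _ ↦ by linarith [sub_one_mul_exp_add_one_nonneg y]) hy
    exact ((hasDerivAt_id' y).add ((((hasDerivAt_exp y).sub_const 1).sub
      (hasDerivAt_id' y)).div_const 3)).sub ((((hasDerivAt_id' y).div_const 3).const_sub 1).mul
      ((hasDerivAt_exp y).sub_const 1)) |>.congr_deriv (by ring)
  refine sub_nonneg.1 (nonneg_of_hasDerivAt_nonneg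
    (f := fun u ↦ u ^ 2 / 2 - (1 - u / 3) * (exp u - 1 - u)) (fun y ↦ ?_) (by simp)
    (fun y hy ↦ hderiv_nonneg y hy.le) hu)
  exact ((hasDerivAt_pow 2 y).div_const 2).sub ((((hasDerivAt_id' y).div_const 3).const_sub 1).mul
    (((hasDerivAt_exp y).sub_const 1).sub (hasDerivAt_id' y)))
    |>.congr_deriv (by simp only [Pi.sub_apply]; ring)

end Real

noncomputable def bernsteinCoeff (c l : ℝ) : ℝ := (exp (l * c) - 1 - l * c) / c ^ 2

lemma bernsteinCoeff_nonneg (c l : ℝ) : 0 ≤ bernsteinCoeff c l :=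
  div_nonneg (by linarith [add_one_le_exp (l * c)]) (sq_nonneg c)

lemma exp_mul_le_one_add_mul_add_bernsteinCoeff_mul_sq {c l x : ℝ} (hc : 0 < c) (hl : 0 < l)
    (hx : |x| ≤ c) :
    exp (l * x) ≤ 1 + l * x + bernsteinCoeff c l * x ^ 2 := by
  rcases le_or_gt x 0 with hx0 | hx0
  · have hquad : l ^ 2 / 2 ≤ bernsteinCoeff c l := by
      rw [bernsteinCoeff, le_div_iff₀ (by positivity)]
      linarith [quadratic_le_exp_of_nonneg (mul_pos hl hc).le]
    calc exp (l * x) ≤ 1 + l * x + (l * x) ^ 2 / 2 :=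
          exp_le_quadratic_of_nonpos (mul_nonpos_of_nonneg_of_nonpos hl.le hx0)
      _ ≤ 1 + l * x + bernsteinCoeff c l * x ^ 2 := by nlinarith [sq_nonneg x]
  · have hmono := monotoneOn_exp_sub_one_sub_div_sq (mul_pos hl hx0) (mul_pos hl hc)
      (mul_le_mul_of_nonneg_left (le_of_abs_le hx) hl.le)
    rw [div_le_div_iff₀ (by positivity) (by positivity)] at hmono
    have : (exp (l * x) - 1 - l * x) * (l * c) ^ 2 ≤ bernsteinCoeff c l * x ^ 2 * (l * c) ^ 2 :=
      hmono.trans_eq (by rw [bernsteinCoeff]; field_simp)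
    linarith [le_of_mul_le_mul_right this (by positivity)]

/- For this `λ`, `1 - λc/3 = 3G / (3G + cb)`, and the bound on `(1 - u/3)(exp u - 1 - u)` at
`u = λc` makes `φ(λ) G` at most `λb/2`. -/
lemma bernsteinCoeff_mul_sub_le {b G c : ℝ} (hb : 0 < b) (hG : 0 < G) (hc : 0 < c) :
    bernsteinCoeff c (3 * b / (3 * G + c * b)) * G - 3 * b / (3 * G + c * b) * b
      ≤ -b ^ 2 / (2 * G + 2 * c * b / 3) := by
  have key := one_sub_div_three_mul_exp_sub_one_sub_le
    (u := 3 * b / (3 * G + c * b) * c) (by positivity)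
  set A := exp (3 * b / (3 * G + c * b) * c) - 1 - 3 * b / (3 * G + c * b) * c
  have hA : A * G ≤ 3 * b ^ 2 * c ^ 2 / (2 * (3 * G + c * b)) := by
    have : 1 - 3 * b / (3 * G + c * b) * c / 3 = 3 * G / (3 * G + c * b) := by
      field_simp; ring
    rw [this] at key
    rw [le_div_iff₀ (by positivity)]
    field_simp at key
    nlinarith
  have hrhs : -b ^ 2 / (2 * G + 2 * c * b / 3) = 3 * b ^ 2 / (2 * (3 * G + c * b))
      - 3 * b / (3 * G + c * b) * b := by
    field_simp; ring
  rw [hrhs, bernsteinCoeff, div_mul_eq_mul_div]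
  refine sub_le_sub_right ?_ _
  rw [div_le_iff₀ (by positivity)]
  calc A * G ≤ 3 * b ^ 2 * c ^ 2 / (2 * (3 * G + c * b)) := hA
    _ = _ := by ring

section Martingale

variable {Ω : Type*} {m m0 : MeasurableSpace Ω} {μ : Measure Ω}

lemma integrable_exp_of_le [IsFiniteMeasure μ] {f : Ω → ℝ} {C : ℝ}
    (hf : AEStronglyMeasurable f μ) (hfC : ∀ᵐ ω ∂μ, f ω ≤ C) :
    Integrable (fun ω ↦ exp (f ω)) μ := by
  refine .of_bound (continuous_exp.comp_aestronglyMeasurable hf) (exp C) ?_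
  filter_upwards [hfC] with ω hω
  rw [norm_of_nonneg (exp_pos _).le]
  exact exp_le_exp.2 hω

lemma integrable_exp_mul_of_abs_le [IsFiniteMeasure μ] {Z : Ω → ℝ} {c l : ℝ} (hl : 0 ≤ l)
    (hZ : AEStronglyMeasurable Z μ) (hZc : ∀ᵐ ω ∂μ, |Z ω| ≤ c) :
    Integrable (fun ω ↦ exp (l * Z ω)) μ :=
  integrable_exp_of_le (hZ.const_mul l) (hZc.mono fun _ hω ↦
    mul_le_mul_of_nonneg_left (le_of_abs_le hω) hl)

lemma condExp_exp_mul_le [IsFiniteMeasure μ] (hm : m ≤ m0)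
    {Z : Ω → ℝ} {c l : ℝ} (hc : 0 < c) (hl : 0 < l) (hZ : AEStronglyMeasurable Z μ)
    (hZ0 : μ[Z | m] =ᵐ[μ] 0) (hZc : ∀ᵐ ω ∂μ, |Z ω| ≤ c) :
    μ[fun ω ↦ exp (l * Z ω) | m]
      ≤ᵐ[μ] fun ω ↦ exp (bernsteinCoeff c l * μ[fun ω ↦ Z ω ^ 2 | m] ω) := by
  set a := bernsteinCoeff c l
  have hZint : Integrable Z μ := .of_bound hZ c (by simpa using hZc)
  have hZ2int : Integrable (fun ω ↦ Z ω ^ 2) μ := by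
    refine .of_bound (hZ.pow 2) (c ^ 2) ?_
    filter_upwards [hZc] with ω hω
    simpa [sq_abs] using pow_le_pow_left₀ (abs_nonneg _) hω 2
  have hexp := integrable_exp_mul_of_abs_le hl.le hZ hZc
  have hlin : μ[(fun _ ↦ (1 : ℝ)) + (l • Z + a • fun ω ↦ Z ω ^ 2) | m]
      =ᵐ[μ] fun ω ↦ 1 + a * μ[fun ω ↦ Z ω ^ 2 | m] ω := by
    have hlZ : Integrable (l • Z) μ := hZint.smul l
    have haZ2 : Integrable (a • fun ω ↦ Z ω ^ 2) μ := hZ2int.smul a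
    filter_upwards [condExp_add (integrable_const 1) (hlZ.add haZ2) m, condExp_add hlZ haZ2 m,
      condExp_smul l Z m, condExp_smul a (fun ω ↦ Z ω ^ 2) m, hZ0] with ω h1 h2 h3 h4 h5
    simp [h1, h2, h3, h4, h5, condExp_const hm]
  have hquad : (fun ω ↦ exp (l * Z ω))
      ≤ᵐ[μ] (fun _ ↦ (1 : ℝ)) + (l • Z + a • fun ω ↦ Z ω ^ 2) := by
    filter_upwards [hZc] with ω hω
    simpa [add_assoc] using exp_mul_le_one_add_mul_add_bernsteinCoeff_mul_sq hc hl hω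
  filter_upwards [condExp_mono hexp ((integrable_const 1).add ((hZint.smul l).add (hZ2int.smul a)))
    hquad, hlin] with ω h1 h2
  exact (h1.trans_eq h2).trans (by linarith [add_one_le_exp (a * μ[fun ω ↦ Z ω ^ 2 | m] ω)])

lemma condExp_exp_mul_sub_le_one [IsFiniteMeasure μ] (hm : m ≤ m0)
    {Z : Ω → ℝ} {c l : ℝ} (hc : 0 < c) (hl : 0 < l) (hZ : AEStronglyMeasurable Z μ)
    (hZ0 : μ[Z | m] =ᵐ[μ] 0) (hZc : ∀ᵐ ω ∂μ, |Z ω| ≤ c) :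
    μ[fun ω ↦ exp (l * Z ω - bernsteinCoeff c l * μ[fun ω ↦ Z ω ^ 2 | m] ω) | m]
      ≤ᵐ[μ] 1 := by
  set V := μ[fun ω ↦ Z ω ^ 2 | m]
  set a := bernsteinCoeff c l
  have hV : 0 ≤ᵐ[μ] V := condExp_nonneg (.of_forall fun ω ↦ sq_nonneg (Z ω))
  have hsplit : (fun ω ↦ exp (l * Z ω - a * V ω))
      = (fun ω ↦ exp (-(a * V ω))) * fun ω ↦ exp (l * Z ω) := by
    ext ω; simp [sub_eq_neg_add, exp_add]
  have hprod : Integrable (fun ω ↦ exp (l * Z ω - a * V ω)) μ := by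
    refine integrable_exp_of_le (C := l * c) ((hZ.const_mul l).sub
      ((stronglyMeasurable_condExp.mono hm).aestronglyMeasurable.const_mul a)) ?_
    filter_upwards [hZc, hV] with ω hZω hVω
    nlinarith [le_of_abs_le hZω, mul_nonneg (bernsteinCoeff_nonneg c l) hVω]
  have hexp := integrable_exp_mul_of_abs_le hl.le hZ hZc
  have hW : StronglyMeasurable[m] fun ω ↦ exp (-(a * V ω)) :=
    continuous_exp.comp_stronglyMeasurable (stronglyMeasurable_condExp.const_mul a).neg
  rw [hsplit] at hprod ⊢
  filter_upwards [condExp_mul_of_stronglyMeasurable_left hW hprod hexp,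
    condExp_exp_mul_le hm hc hl hZ hZ0 hZc] with ω h1 h2
  calc _ = exp (-(a * V ω)) * μ[fun ω ↦ exp (l * Z ω) | m] ω := h1
    _ ≤ exp (-(a * V ω)) * exp (a * V ω) := by gcongr
    _ = 1 := by rw [← exp_add, neg_add_cancel, exp_zero]

lemma integrable_exp_sum_of_le [IsFiniteMeasure μ] {D : ℕ → Ω → ℝ} {C : ℝ}
    (hD : ∀ i, AEStronglyMeasurable (D i) μ) (hDC : ∀ i, ∀ᵐ ω ∂μ, D i ω ≤ C)
    (n : ℕ) :
    Integrable (fun ω ↦ exp (∑ i ∈ Finset.range n, D i ω)) μ := by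
  refine integrable_exp_of_le (C := n * C)
    (Finset.aestronglyMeasurable_fun_sum _ fun i _ ↦ hD i) ?_
  filter_upwards [ae_all_iff.2 hDC] with ω hω
  simpa using Finset.sum_le_sum fun i (_ : i ∈ Finset.range n) ↦ hω i

lemma integral_exp_sum_le_one [IsProbabilityMeasure μ] (ℱ : Filtration ℕ m0)
    {D : ℕ → Ω → ℝ} {C : ℝ} (hD : ∀ i, StronglyMeasurable[ℱ (i + 1)] (D i))
    (hDC : ∀ i, ∀ᵐ ω ∂μ, D i ω ≤ C)
    (hcond : ∀ i, μ[fun ω ↦ exp (D i ω) | ℱ i] ≤ᵐ[μ] 1) (n : ℕ) :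
    ∫ ω, exp (∑ i ∈ Finset.range n, D i ω) ∂μ ≤ 1 := by
  have hint :=
    integrable_exp_sum_of_le (fun i ↦ ((hD i).mono (ℱ.le _)).aestronglyMeasurable) hDC
  induction n with
  | zero => simp
  | succ k ih =>
    set W := fun ω ↦ exp (∑ i ∈ Finset.range k, D i ω)
    set Z := fun ω ↦ exp (D k ω)
    have hW : StronglyMeasurable[ℱ k] W :=
      continuous_exp.comp_stronglyMeasurable (Finset.stronglyMeasurable_fun_sum _
        fun i hi ↦ (hD i).mono (ℱ.mono (Finset.mem_range.1 hi)))
    have hsplit : (fun ω ↦ exp (∑ i ∈ Finset.range (k + 1), D i ω)) = W * Z := by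
      ext ω; simp [W, Z, Finset.sum_range_succ, exp_add]
    have hZ : Integrable Z μ :=
      integrable_exp_of_le ((hD k).mono (ℱ.le _)).aestronglyMeasurable (hDC k)
    have hWZ : Integrable (W * Z) μ := hsplit ▸ hint (k + 1)
    have hpull := condExp_mul_of_stronglyMeasurable_left hW hWZ hZ
    calc ∫ ω, exp (∑ i ∈ Finset.range (k + 1), D i ω) ∂μ
        = ∫ ω, μ[W * Z | ℱ k] ω ∂μ := by rw [integral_condExp (ℱ.le k), hsplit]
      _ = ∫ ω, W ω * μ[Z | ℱ k] ω ∂μ := integral_congr_ae hpull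
      _ ≤ ∫ ω, W ω ∂μ := by
          refine integral_mono_ae (integrable_condExp.congr hpull) (hint k) ?_
          filter_upwards [hcond k] with ω hω
          exact mul_le_of_le_one_right (exp_pos _).le hω
      _ ≤ 1 := ih

lemma measure_lt_sum_and_sum_condExp_sq_le_le_exp [IsProbabilityMeasure μ]
    (ℱ : Filtration ℕ m0) {X : ℕ → Ω → ℝ} {c : ℝ} (hc : 0 < c)
    (hmeas : ∀ i, StronglyMeasurable[ℱ (i + 1)] (X i))
    (hmd : ∀ i, μ[X i | ℱ i] =ᵐ[μ] 0) (hbdd : ∀ i, ∀ᵐ ω ∂μ, |X i ω| ≤ c)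
    {l : ℝ} (hl : 0 < l) (b G : ℝ) (n : ℕ) :
    μ {ω | b < ∑ i ∈ Finset.range n, X i ω ∧
        ∑ i ∈ Finset.range n, μ[fun ω ↦ X i ω ^ 2 | ℱ i] ω ≤ G}
      ≤ ENNReal.ofReal (exp (bernsteinCoeff c l * G - l * b)) := by
  set a := bernsteinCoeff c l
  set V : ℕ → Ω → ℝ := fun i ↦ μ[fun ω ↦ X i ω ^ 2 | ℱ i]
  set D : ℕ → Ω → ℝ := fun i ω ↦ l * X i ω - a * V i ω
  have hD : ∀ i, StronglyMeasurable[ℱ (i + 1)] (D i) := fun i ↦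
    ((hmeas i).const_mul l).sub ((stronglyMeasurable_condExp.mono (ℱ.mono i.le_succ)).const_mul a)
  have hDC : ∀ i, ∀ᵐ ω ∂μ, D i ω ≤ l * c := fun i ↦ by
    filter_upwards [hbdd i, condExp_nonneg (.of_forall fun ω ↦ sq_nonneg (X i ω))]
      with ω hX hV
    nlinarith [le_of_abs_le hX, mul_nonneg (bernsteinCoeff_nonneg c l) hV]
  have hcond : ∀ i, μ[fun ω ↦ exp (D i ω) | ℱ i] ≤ᵐ[μ] 1 := fun i ↦
    condExp_exp_mul_sub_le_one (ℱ.le i) hc hl ((hmeas i).mono (ℱ.le _)).aestronglyMeasurable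
      (hmd i) (hbdd i)
  have hsub : {ω | b < ∑ i ∈ Finset.range n, X i ω ∧ ∑ i ∈ Finset.range n, V i ω ≤ G}
      ⊆ {ω | l * b - a * G ≤ ∑ i ∈ Finset.range n, D i ω} := by
    rintro ω ⟨hS, hV⟩
    simp only [D, Set.mem_ofPred_eq, Finset.sum_sub_distrib, ← Finset.mul_sum]
    nlinarith [bernsteinCoeff_nonneg c l]
  have hint := integrable_exp_sum_of_le
    (fun i ↦ ((hD i).mono (ℱ.le _)).aestronglyMeasurable) hDC n
  have hchernoff := measure_ge_le_exp_mul_mgf (l * b - a * G) zero_le_one (by simpa using hint)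
  have hmgf : mgf (fun ω ↦ ∑ i ∈ Finset.range n, D i ω) μ 1 ≤ 1 := by
    simpa [mgf] using integral_exp_sum_le_one ℱ hD hDC hcond n
  calc _ ≤ μ {ω | l * b - a * G ≤ ∑ i ∈ Finset.range n, D i ω} := measure_mono hsub
    _ = ENNReal.ofReal (μ.real {ω | l * b - a * G ≤ ∑ i ∈ Finset.range n, D i ω}) :=
        (ofReal_measureReal).symm
    _ ≤ ENNReal.ofReal (exp (a * G - l * b)) := by
        refine ENNReal.ofReal_le_ofReal (hchernoff.trans ?_)
        calc _ ≤ exp (-1 * (l * b - a * G)) * 1 := by gcongr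
          _ = exp (a * G - l * b) := by ring_nf

lemma measure_lt_sum_and_sum_condExp_sq_le_le_bernstein [IsProbabilityMeasure μ]
    (ℱ : Filtration ℕ m0) {X : ℕ → Ω → ℝ} {c : ℝ} (hc : 0 < c)
    (hmeas : ∀ i, StronglyMeasurable[ℱ (i + 1)] (X i)) (hmd : ∀ i, μ[X i | ℱ i] =ᵐ[μ] 0)
    (hbdd : ∀ i, ∀ᵐ ω ∂μ, |X i ω| ≤ c) {b G : ℝ} (hb : 0 < b) (hG : 0 < G)
    (n : ℕ) :
    μ {ω | b < ∑ i ∈ Finset.range n, X i ω ∧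
        ∑ i ∈ Finset.range n, μ[fun ω ↦ X i ω ^ 2 | ℱ i] ω ≤ G}
      ≤ ENNReal.ofReal (exp (-b ^ 2 / (2 * G + 2 * c * b / 3))) :=
  (measure_lt_sum_and_sum_condExp_sq_le_le_exp ℱ hc hmeas hmd hbdd (by positivity) b G n).trans
    (ENNReal.ofReal_le_ofReal (exp_le_exp.2 (bernsteinCoeff_mul_sub_le hb hG hc)))

end Martingale

theorem bernstein_martingale_differences_general {Ω : Type*} {m0 : MeasurableSpace Ω}
    (μ : Measure Ω) [IsProbabilityMeasure μ]
    (ℱ : Filtration ℕ m0) (X σ2 : ℕ → Ω → ℝ)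
    (c : ℝ) (hc : 0 < c)
    (hmeas : ∀ i, StronglyMeasurable[ℱ (i + 1)] (X i))
    (hmd : ∀ i, μ[X i | ℱ i] =ᵐ[μ] 0)
    (hbdd : ∀ i, ∀ᵐ ω ∂μ, |X i ω| ≤ c)
    (hσ2 : ∀ i, σ2 i =ᵐ[μ] μ[fun ω => (X i ω) ^ 2 | ℱ i])
    (b G : ℝ) (hb : 0 < b) (hG : 0 < G) (n : ℕ) :
    μ {ω | b < |∑ i ∈ Finset.range n, X i ω| ∧ ∑ i ∈ Finset.range n, σ2 i ω ≤ G}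
      ≤ ENNReal.ofReal (2 * Real.exp (-b ^ 2 / (2 * G + 2 * c * b / 3))) := by
  have hupper := measure_lt_sum_and_sum_condExp_sq_le_le_bernstein ℱ hc hmeas hmd hbdd hb hG n
  have hlower := measure_lt_sum_and_sum_condExp_sq_le_le_bernstein ℱ (X := fun i ↦ -X i) hc
    (fun i ↦ (hmeas i).neg)
    (fun i ↦ by filter_upwards [condExp_neg (X i) (ℱ i), hmd i] with ω h1 h2; simp [h1, h2])
    (fun i ↦ by simpa using hbdd i) hb hG n
  have hsub :
      {ω | b < |∑ i ∈ Finset.range n, X i ω| ∧ ∑ i ∈ Finset.range n, σ2 i ω ≤ G}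
      ≤ᵐ[μ] ({ω | b < ∑ i ∈ Finset.range n, X i ω ∧
          ∑ i ∈ Finset.range n, μ[fun ω ↦ X i ω ^ 2 | ℱ i] ω ≤ G} ∪
        {ω | b < ∑ i ∈ Finset.range n, -X i ω ∧
          ∑ i ∈ Finset.range n, μ[fun ω ↦ (-X i ω) ^ 2 | ℱ i] ω ≤ G} : Set Ω) := by
    filter_upwards [ae_all_iff.2 hσ2] with ω hω
    rintro ⟨hS, hV⟩
    simp only [hω, neg_sq, Finset.sum_neg_distrib] at hV ⊢
    rcases lt_abs.1 hS with h | h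
    · exact Or.inl ⟨h, hV⟩
    · exact Or.inr ⟨h, hV⟩
  calc _ ≤ _ := measure_mono_ae hsub
    _ ≤ _ := measure_union_le _ _
    _ ≤ _ := add_le_add hupper hlower
    _ = _ := by rw [← ENNReal.ofReal_add (exp_pos _).le (exp_pos _).le, ← two_mul]

/-- Bernstein's inequality for martingale differences. Here the
martingale difference sequence is `X 0, X 1, …` with respect to the filtration `ℱ`
(`X i` is `ℱ (i+1)`-measurable and `E[X i | ℱ i] = 0`), `|X i| ≤ c` almost surely,
and `σ2 i = E[(X i)² | ℱ i]` are the conditional variances. -/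
theorem bernstein_martingale_differences {Ω : Type*} {m0 : MeasurableSpace Ω}
    (μ : Measure Ω) [IsProbabilityMeasure μ]
    (ℱ : Filtration ℕ m0) (X σ2 : ℕ → Ω → ℝ)
    (c : ℝ) (hc : 0 < c)
    (hmeas : ∀ i, StronglyMeasurable[ℱ (i + 1)] (X i))
    (hmd : ∀ i, μ[X i | ℱ i] =ᵐ[μ] 0)
    (hbdd : ∀ i, ∀ᵐ ω ∂μ, |X i ω| ≤ c)
    (hσ2 : ∀ i, σ2 i =ᵐ[μ] μ[fun ω => (X i ω) ^ 2 | ℱ i])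
    (b G : ℝ) (hb : 0 < b) (hG : 0 < G) (n : ℕ) (hn : 1 ≤ n) :
    μ {ω | b < |∑ i ∈ Finset.range n, X i ω| ∧ ∑ i ∈ Finset.range n, σ2 i ω ≤ G}
      ≤ ENNReal.ofReal (2 * Real.exp (-b ^ 2 / (2 * G + 2 * c * b / 3))) :=
  bernstein_martingale_differences_general μ ℱ X σ2 c hc hmeas hmd hbdd hσ2 b G hb hG n
end
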